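/- Lower bound on the marginal posterior probability of the true configuration. For every realization of the data y, the marginal posterior probability of S* satisfies π^n(S*) ≥ D_n^{−1} π(S*) (γ/(α+γ))^{|S*|/2}, where D_n = Σ_S π(S) ∫ R_n^α(β_{S+}) π_n(β_S|S) dβ_S, with R_n(β) = L_n(β)/L_n(β*) the likelihood ratio, L_n(β) = exp{−‖y − Xβ‖²/(2σ²)}, and β_{S+} ∈ R^p the vector equal to β_S on S and 0 off S. The bound follows since ‖y − ŷ_{S*}‖² ≤ ‖y − Xβ*‖². -/

import Mathlib

/-!
Completing the square around the least-squares fit,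
`‖y - X_S b‖² = ‖y - ŷ_S‖² + (b - β̂_S)ᵀ X_Sᵀ X_S (b - β̂_S)`, turns every integral in `D_n` into a
Gaussian integral, and evaluating it shows that `D_n = exp(α ‖y - Xβ*‖² / (2σ²))` times the
normalising constant of `π^n`. The bound then reduces to `‖y - ŷ_{S*}‖² ≤ ‖y - Xβ*‖²`, which holds
because `Xβ*` lies in the column span of `X_{S*}`.
-/

open MeasureTheory ProbabilityTheory Real Filter Matrix Asymptotics
open scoped ENNReal NNReal Classical Topology

noncomputable section

namespace VB

/-- The configuration (support) of a coefficient vector. -/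
def config {p : ℕ} (β : Fin p → ℝ) : Finset (Fin p) :=
  Finset.univ.filter fun j => β j ≠ 0

/-- The submatrix of `X` consisting of the columns indexed by `S`. -/
def XS {n p : ℕ} (X : Matrix (Fin n) (Fin p) ℝ) (S : Finset (Fin p)) :
    Matrix (Fin n) S ℝ := Matrix.of fun i j => X i j.1

/-- The Gram matrix `X_Sᵀ X_S`. -/
def gram {n p : ℕ} (X : Matrix (Fin n) (Fin p) ℝ) (S : Finset (Fin p)) :
    Matrix S S ℝ := (XS X S)ᵀ * XS X S

/-- The least squares estimator based on the columns in `S`: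
`β̂_S = (X_Sᵀ X_S)⁻¹ X_Sᵀ y`. -/
def lse {n p : ℕ} (X : Matrix (Fin n) (Fin p) ℝ) (S : Finset (Fin p)) (y : Fin n → ℝ) :
    S → ℝ := (gram X S)⁻¹.mulVec ((XS X S)ᵀ.mulVec y)

/-- Squared Euclidean norm of a vector. -/
def sqNorm {ι : Type*} [Fintype ι] (v : ι → ℝ) : ℝ := ∑ i, v i ^ 2

/-- Lebesgue density of the empirical conditional prior
`N(β̂_S, γ⁻¹ σ² (X_Sᵀ X_S)⁻¹)` for `β_S` given `S`. -/
def priorDens (σ2 γ : ℝ) {n p : ℕ} (X : Matrix (Fin n) (Fin p) ℝ) (S : Finset (Fin p))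
    (y : Fin n → ℝ) (b : S → ℝ) : ℝ :=
  Real.sqrt ((gram X S).det * (γ / (2 * π * σ2)) ^ S.card) *
    Real.exp (-(γ / (2 * σ2)) * ((b - lse X S y) ⬝ᵥ (gram X S).mulVec (b - lse X S y)))

/-- The `α`-power likelihood `exp{-(α/(2σ²)) ‖y - X_S β_S‖²}`. -/
def likeα (α σ2 : ℝ) {n p : ℕ} (X : Matrix (Fin n) (Fin p) ℝ) (S : Finset (Fin p))
    (y : Fin n → ℝ) (b : S → ℝ) : ℝ :=
  Real.exp (-(α / (2 * σ2)) * sqNorm (y - (XS X S).mulVec b))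

/-- Unnormalized prior weight of a configuration `S`:
`binom(p,|S|)⁻¹ (c p^a)^{-|S|}` for `|S| ≤ n`, else `0`. -/
def priorSWt (a c : ℝ) (n p : ℕ) (S : Finset (Fin p)) : ℝ :=
  if S.card ≤ n then ((p.choose S.card : ℝ) * (c * (p : ℝ) ^ a) ^ S.card)⁻¹ else 0

/-- Normalized prior probability of a configuration `S`. -/
def priorS (a c : ℝ) (n p : ℕ) (S : Finset (Fin p)) : ℝ :=
  priorSWt a c n p S / ∑ T : Finset (Fin p), priorSWt a c n p T

/-- Embed a vector indexed by `S` into `ℝ^p`, filling in zeros off `S`. -/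
def embed {p : ℕ} (S : Finset (Fin p)) (b : S → ℝ) : Fin p → ℝ :=
  fun j => if h : j ∈ S then b ⟨j, h⟩ else 0

/-- The (unnormalized) component of the empirical Bayes posterior corresponding to
configuration `S`: the measure on `ℝ^p`, supported on vectors vanishing off `S`, with
density `L_n^α(S, β_S) π_n(β_S | S)` over `β_S`. -/
def postComp (α σ2 γ : ℝ) {n p : ℕ} (X : Matrix (Fin n) (Fin p) ℝ) (y : Fin n → ℝ)
    (S : Finset (Fin p)) : Measure (Fin p → ℝ) :=
  ((volume : Measure (S → ℝ)).withDensity fun b =>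
      ENNReal.ofReal (likeα α σ2 X S y b * priorDens σ2 γ X S y b)).map (embed S)

/-- The unnormalized empirical Bayes posterior on `ℝ^p`. -/
def postUn (α σ2 γ a c : ℝ) {n p : ℕ} (X : Matrix (Fin n) (Fin p) ℝ) (y : Fin n → ℝ) :
    Measure (Fin p → ℝ) :=
  Measure.sum fun S : Finset (Fin p) =>
    ENNReal.ofReal (priorS a c n p S) • postComp α σ2 γ X y S

/-- The empirical Bayes posterior `π^n` on `ℝ^p` (normalized). -/
def post (α σ2 γ a c : ℝ) {n p : ℕ} (X : Matrix (Fin n) (Fin p) ℝ) (y : Fin n → ℝ) :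
    Measure (Fin p → ℝ) :=
  (postUn α σ2 γ a c X y Set.univ)⁻¹ • postUn α σ2 γ a c X y

/-- One coordinate of a mean-field distribution: `φ N(μ, τ²) + (1-φ) δ₀`. -/
def mixComp (φ μ : ℝ) (τ2 : ℝ≥0) : Measure ℝ :=
  ENNReal.ofReal φ • gaussianReal μ τ2 + ENNReal.ofReal (1 - φ) • Measure.dirac 0

/-- A mean-field distribution on `ℝ^p`. -/
def meanField {p : ℕ} (φ μ : Fin p → ℝ) (τ2 : Fin p → ℝ≥0) : Measure (Fin p → ℝ) :=
  Measure.pi fun j => mixComp (φ j) (μ j) (τ2 j)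

/-- The mean-field variational family `Q`. -/
def MeanFieldFamily (p : ℕ) : Set (Measure (Fin p → ℝ)) :=
  { q | ∃ (φ μ : Fin p → ℝ) (τ2 : Fin p → ℝ≥0),
      (∀ j, φ j ∈ Set.Icc (0 : ℝ) 1) ∧ (∀ j, 0 < τ2 j) ∧ q = meanField φ μ τ2 }

/-- Kullback–Leibler divergence `K(q, P) = ∫ log (dq/dP) dq`, set to `⊤` when `q` is not
absolutely continuous with respect to `P`. -/
def KL {𝓧 : Type*} [MeasurableSpace 𝓧] (q P : Measure 𝓧) : EReal :=
  if q ≪ P then ((∫ x, Real.log (q.rnDeriv P x).toReal ∂q : ℝ) : EReal) else ⊤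

/-- `q` is a variational approximation of `P`: it belongs to the mean-field family and
minimizes the Kullback–Leibler divergence to `P` over that family. -/
def IsVarApprox {p : ℕ} (q P : Measure (Fin p → ℝ)) : Prop :=
  q ∈ MeanFieldFamily p ∧ ∀ q' ∈ MeanFieldFamily p, KL q P ≤ KL q' P

/-- The sampling distribution of the data: `y ~ N_n(Xβ, σ² I_n)`. -/
def dataDist (σ2 : ℝ) {n p : ℕ} (X : Matrix (Fin n) (Fin p) ℝ) (β : Fin p → ℝ) :
    Measure (Fin n → ℝ) :=
  Measure.pi fun i => gaussianReal (X.mulVec β i) σ2.toNNReal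

end VB

namespace VB

/-- Least squares fitted value `ŷ_S = X_S β̂_S`. -/
def fitted {n p : ℕ} (X : Matrix (Fin n) (Fin p) ℝ) (S : Finset (Fin p)) (y : Fin n → ℝ) :
    Fin n → ℝ := (XS X S).mulVec (lse X S y)

/-- Unnormalized marginal posterior mass of configuration `S`:
`π(S) (γ/(α+γ))^{|S|/2} exp{-(α/(2σ²)) ‖y - ŷ_S‖²}`. -/
def margUn (α σ2 γ a c : ℝ) {n p : ℕ} (X : Matrix (Fin n) (Fin p) ℝ) (y : Fin n → ℝ)
    (S : Finset (Fin p)) : ℝ :=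
  priorS a c n p S * Real.sqrt ((γ / (α + γ)) ^ S.card) *
    Real.exp (-(α / (2 * σ2)) * sqNorm (y - fitted X S y))

/-- The marginal posterior probability of configuration `S`. -/
def marg (α σ2 γ a c : ℝ) {n p : ℕ} (X : Matrix (Fin n) (Fin p) ℝ) (y : Fin n → ℝ)
    (S : Finset (Fin p)) : ℝ :=
  margUn α σ2 γ a c X y S / ∑ T : Finset (Fin p), margUn α σ2 γ a c X y T

/-- The denominator `D_n = Σ_S π(S) ∫ R_n^α(β_{S+}) π_n(β_S|S) dβ_S`, where
`R_n(β) = L_n(β)/L_n(β*)` is the likelihood ratio. -/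
def Dn (α σ2 γ a c : ℝ) {n p : ℕ} (X : Matrix (Fin n) (Fin p) ℝ) (y : Fin n → ℝ)
    (βstar : Fin p → ℝ) : ℝ :=
  ∑ S : Finset (Fin p), priorS a c n p S *
    ∫ b : S → ℝ,
      Real.exp (-(α / (2 * σ2)) *
          (sqNorm (y - (XS X S).mulVec b) - sqNorm (y - X.mulVec βstar))) *
        priorDens σ2 γ X S y b

theorem _root_.Real.sqrt_pow {x : ℝ} (hx : 0 ≤ x) (k : ℕ) : √(x ^ k) = √x ^ k := by
  rw [← Real.sqrt_sq (by positivity : 0 ≤ √x ^ k), ← pow_mul, mul_comm, pow_mul, Real.sq_sqrt hx]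

section Gaussian

variable {ι : Type*} [Fintype ι]

theorem integral_exp_neg_mul_sqNorm (c : ℝ) :
    ∫ u : ι → ℝ, Real.exp (-c * sqNorm u) = √(π / c) ^ Fintype.card ι := by
  have hprod (u : ι → ℝ) : Real.exp (-c * sqNorm u) = ∏ i, Real.exp (-c * u i ^ 2) := by
    rw [sqNorm, Finset.mul_sum, Real.exp_sum]
  simp_rw [hprod]
  rw [volume_pi, integral_fintype_prod_eq_pow (fun x : ℝ => Real.exp (-c * x ^ 2)),
    integral_gaussian]

theorem integral_comp_mulVec [DecidableEq ι] {M : Matrix ι ι ℝ} (hM : M.det ≠ 0)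
    (f : (ι → ℝ) → ℝ) : ∫ x, f (M *ᵥ x) = |M.det|⁻¹ * ∫ x, f x := by
  have hemb : MeasurableEmbedding (toLin' M) :=
    (toLinearEquiv' M (invertibleOfIsUnitDet M (isUnit_iff_ne_zero.mpr hM))
      ).toContinuousLinearEquiv.toHomeomorph.measurableEmbedding
  have hmap := hemb.integral_map (μ := volume) f
  simp only [toLin'_apply] at hmap
  rw [← hmap, Real.map_matrix_volume_pi_eq_smul_volume_pi hM,
    integral_smul_measure, ENNReal.toReal_ofReal (by positivity), abs_inv, smul_eq_mul]

open scoped MatrixOrder in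
theorem integral_exp_neg_mul_dotProduct_mulVec [DecidableEq ι] {G : Matrix ι ι ℝ}
    (hG : G.PosDef) {c : ℝ} (hc : 0 ≤ c) :
    ∫ q : ι → ℝ, Real.exp (-c * (q ⬝ᵥ G *ᵥ q)) = √((π / c) ^ Fintype.card ι / G.det) := by
  obtain ⟨R, rfl⟩ := CStarAlgebra.nonneg_iff_eq_star_mul_self.mp hG.posSemidef.nonneg
  have hdet : (star R * R).det = R.det ^ 2 := by
    rw [det_mul, star_eq_conjTranspose, det_conjTranspose, star_trivial, sq]
  have hR : R.det ≠ 0 := by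
    have := hG.det_pos
    rw [hdet] at this
    exact pow_ne_zero_iff two_ne_zero |>.mp this.ne'
  have hquad (q : ι → ℝ) : q ⬝ᵥ (star R * R) *ᵥ q = sqNorm (R *ᵥ q) := by
    rw [← mulVec_mulVec, dotProduct_mulVec, star_eq_conjTranspose,
      conjTranspose_eq_transpose_of_trivial, vecMul_transpose, sqNorm]
    simp [dotProduct, sq]
  simp_rw [hquad]
  rw [integral_comp_mulVec hR (fun u => Real.exp (-c * sqNorm u)), integral_exp_neg_mul_sqNorm,
    hdet, Real.sqrt_div' _ (sq_nonneg _), Real.sqrt_sq_eq_abs, Real.sqrt_pow (by positivity),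
    inv_mul_eq_div]

end Gaussian

section LeastSquares

variable {n p : ℕ} (X : Matrix (Fin n) (Fin p) ℝ) {S : Finset (Fin p)} (y : Fin n → ℝ)

theorem sqNorm_eq_dotProduct {ι : Type*} [Fintype ι] (v : ι → ℝ) : sqNorm v = v ⬝ᵥ v := by
  simp [sqNorm, dotProduct, sq]

theorem gram_posSemidef (S : Finset (Fin p)) : (gram X S).PosSemidef := by
  simpa [gram, conjTranspose_eq_transpose_of_trivial] using posSemidef_conjTranspose_mul_self (XS X S)

theorem gram_posDef (hS : IsUnit (gram X S).det) : (gram X S).PosDef :=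
  (gram_posSemidef X S).posDef_iff_det_ne_zero.mpr hS.ne_zero

theorem transpose_mulVec_sub_fitted (hS : IsUnit (gram X S).det) :
    (XS X S)ᵀ *ᵥ (y - fitted X S y) = 0 := by
  rw [mulVec_sub, fitted, lse, mulVec_mulVec, mulVec_mulVec, ← gram, mul_nonsing_inv _ hS,
    one_mulVec, sub_self]

theorem sqNorm_sub_mulVec_eq (hS : IsUnit (gram X S).det) (b : S → ℝ) :
    sqNorm (y - XS X S *ᵥ b) =
      sqNorm (y - fitted X S y) + (b - lse X S y) ⬝ᵥ gram X S *ᵥ (b - lse X S y) := by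
  set e := y - fitted X S y
  set q := b - lse X S y
  have hres : y - XS X S *ᵥ b = e - XS X S *ᵥ q := by
    simp only [e, q, fitted, mulVec_sub]
    abel
  have hcross : e ⬝ᵥ XS X S *ᵥ q = 0 := by
    rw [dotProduct_mulVec, ← mulVec_transpose, transpose_mulVec_sub_fitted X y hS, zero_dotProduct]
  have hgram : XS X S *ᵥ q ⬝ᵥ XS X S *ᵥ q = q ⬝ᵥ gram X S *ᵥ q := by
    rw [dotProduct_mulVec, ← mulVec_transpose, mulVec_mulVec, ← gram, dotProduct_comm]
  clear_value e q
  rw [hres, sqNorm_eq_dotProduct, sqNorm_eq_dotProduct, sub_dotProduct, dotProduct_sub,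
    dotProduct_sub, hcross, dotProduct_comm (XS X S *ᵥ q), hcross, hgram]
  ring

theorem sqNorm_sub_fitted_le (hS : IsUnit (gram X S).det) (b : S → ℝ) :
    sqNorm (y - fitted X S y) ≤ sqNorm (y - XS X S *ᵥ b) := by
  rw [sqNorm_sub_mulVec_eq X y hS b]
  simpa using (gram_posSemidef X S).dotProduct_mulVec_nonneg (b - lse X S y)

theorem mulVec_eq_XS_config_mulVec (β : Fin p → ℝ) :
    X *ᵥ β = XS X (config β) *ᵥ fun j => β j := by
  ext i
  simp only [mulVec, dotProduct, XS, of_apply]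
  rw [Finset.sum_coe_sort (config β) (fun j => X i j * β j)]
  refine (Finset.sum_subset (Finset.subset_univ _) fun j _ hj => ?_).symm
  simp_all [config]

end LeastSquares

theorem integral_likeα_mul_priorDens {α σ2 γ : ℝ} (hσ2 : 0 < σ2) (hαγ : 0 < α + γ)
    {n p : ℕ} (X : Matrix (Fin n) (Fin p) ℝ) {S : Finset (Fin p)} (hS : IsUnit (gram X S).det)
    (y : Fin n → ℝ) :
    ∫ b, likeα α σ2 X S y b * priorDens σ2 γ X S y b =
      √((γ / (α + γ)) ^ S.card) * Real.exp (-(α / (2 * σ2)) * sqNorm (y - fitted X S y)) := by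
  set C := √((gram X S).det * (γ / (2 * π * σ2)) ^ S.card)
  set κ := (α + γ) / (2 * σ2)
  have hsquare (b : S → ℝ) : likeα α σ2 X S y b * priorDens σ2 γ X S y b =
      C * Real.exp (-(α / (2 * σ2)) * sqNorm (y - fitted X S y)) *
        Real.exp (-κ * ((b - lse X S y) ⬝ᵥ gram X S *ᵥ (b - lse X S y))) := by
    rw [likeα, priorDens, sqNorm_sub_mulVec_eq X y hS b, mul_left_comm, mul_assoc C,
      ← Real.exp_add, ← Real.exp_add]
    congr 2
    ring
  simp_rw [hsquare]
  rw [integral_const_mul,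
    integral_sub_right_eq_self (fun q => Real.exp (-κ * (q ⬝ᵥ gram X S *ᵥ q))) (lse X S y),
    integral_exp_neg_mul_dotProduct_mulVec (gram_posDef X hS) (by positivity), Fintype.card_coe,
    mul_right_comm, ← Real.sqrt_mul' _ (by positivity [(gram_posDef X hS).det_pos])]
  have hdet : (gram X S).det ≠ 0 := (gram_posDef X hS).det_pos.ne'
  have hbase : γ / (2 * π * σ2) * (π / κ) = γ / (α + γ) := by
    simp only [κ]
    field_simp
  rw [← hbase, mul_pow]
  field_simp

section Prior

variable {a c : ℝ} {n p : ℕ}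

theorem priorSWt_nonneg (hc : 0 < c) (S : Finset (Fin p)) : 0 ≤ priorSWt a c n p S := by
  unfold priorSWt
  split_ifs <;> positivity

theorem priorS_nonneg (hc : 0 < c) (S : Finset (Fin p)) : 0 ≤ priorS a c n p S :=
  div_nonneg (priorSWt_nonneg hc S) (Finset.sum_nonneg fun T _ => priorSWt_nonneg hc T)

theorem priorS_empty_pos (hc : 0 < c) : 0 < priorS a c n p ∅ := by
  have hempty : priorSWt a c n p ∅ = 1 := by simp [priorSWt]
  rw [priorS, hempty]
  exact one_div_pos.mpr <| Finset.sum_pos' (fun T _ => priorSWt_nonneg hc T)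
    ⟨∅, Finset.mem_univ _, hempty ▸ one_pos⟩

theorem priorS_eq_zero {S : Finset (Fin p)} (hS : ¬S.card ≤ n) : priorS a c n p S = 0 := by
  rw [priorS, priorSWt, if_neg hS, zero_div]

end Prior

section Marginal

variable {α σ2 γ a c : ℝ} {n p : ℕ} (X : Matrix (Fin n) (Fin p) ℝ) (y : Fin n → ℝ)

theorem margUn_nonneg (hc : 0 < c) (S : Finset (Fin p)) : 0 ≤ margUn α σ2 γ a c X y S := by
  unfold margUn
  have := priorS_nonneg (a := a) (n := n) hc S
  positivity

theorem sum_margUn_pos (hc : 0 < c) : 0 < ∑ S : Finset (Fin p), margUn α σ2 γ a c X y S := by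
  refine Finset.sum_pos' (fun S _ => margUn_nonneg X y hc S) ⟨∅, Finset.mem_univ _, ?_⟩
  have := priorS_empty_pos (a := a) (n := n) (p := p) hc
  simp only [margUn, Finset.card_empty, pow_zero, Real.sqrt_one, mul_one]
  positivity

theorem Dn_eq_exp_mul_sum_margUn (hσ2 : 0 < σ2) (hαγ : 0 < α + γ)
    (hns : ∀ S : Finset (Fin p), S.card ≤ n → IsUnit (gram X S).det) (βstar : Fin p → ℝ) :
    Dn α σ2 γ a c X y βstar =
      Real.exp (α / (2 * σ2) * sqNorm (y - X *ᵥ βstar)) *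
        ∑ S : Finset (Fin p), margUn α σ2 γ a c X y S := by
  rw [Dn, Finset.mul_sum]
  refine Finset.sum_congr rfl fun S _ => ?_
  have hratio (b : S → ℝ) :
      Real.exp (-(α / (2 * σ2)) * (sqNorm (y - XS X S *ᵥ b) - sqNorm (y - X *ᵥ βstar))) *
          priorDens σ2 γ X S y b =
        Real.exp (α / (2 * σ2) * sqNorm (y - X *ᵥ βstar)) *
          (likeα α σ2 X S y b * priorDens σ2 γ X S y b) := by
    rw [likeα, ← mul_assoc, ← Real.exp_add]
    congr 2
    ring
  simp_rw [hratio]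
  rw [integral_const_mul, margUn]
  by_cases hS : S.card ≤ n
  · rw [integral_likeα_mul_priorDens hσ2 hαγ X (hns S hS)]
    ring
  · rw [priorS_eq_zero hS]
    ring

theorem priorS_mul_exp_le_margUn_config (hσ2 : 0 ≤ σ2) (hα : 0 ≤ α) (hc : 0 < c)
    (hns : ∀ S : Finset (Fin p), S.card ≤ n → IsUnit (gram X S).det) (βstar : Fin p → ℝ)
    (hcard : (config βstar).card ≤ n) :
    priorS a c n p (config βstar) * √((γ / (α + γ)) ^ (config βstar).card) *
        Real.exp (-(α / (2 * σ2)) * sqNorm (y - X *ᵥ βstar)) ≤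
      margUn α σ2 γ a c X y (config βstar) := by
  have hfit : sqNorm (y - fitted X (config βstar) y) ≤ sqNorm (y - X *ᵥ βstar) := by
    rw [mulVec_eq_XS_config_mulVec]
    exact sqNorm_sub_fitted_le X y (hns _ hcard) _
  have := priorS_nonneg (a := a) (n := n) hc (config βstar)
  unfold margUn
  rw [neg_mul, neg_mul]
  gcongr

end Marginal

theorem marginal_lower_bound_general
    (σ2 α γ a c : ℝ)
    (hσ2 : 0 < σ2) (hα : α ∈ Set.Ioo (0 : ℝ) 1) (hγ : 0 < γ) (hc : 0 < c)
    {n p : ℕ} (X : Matrix (Fin n) (Fin p) ℝ)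
    (hns : ∀ S : Finset (Fin p), S.card ≤ n → IsUnit (gram X S).det)
    (βstar : Fin p → ℝ) (hcard : (config βstar).card ≤ n)
    (y : Fin n → ℝ) :
    (Dn α σ2 γ a c X y βstar)⁻¹ * priorS a c n p (config βstar) *
        Real.sqrt ((γ / (α + γ)) ^ (config βstar).card) ≤
      marg α σ2 γ a c X y (config βstar) := by
  have hsum := sum_margUn_pos (α := α) (σ2 := σ2) (γ := γ) (a := a) X y hc
  rw [Dn_eq_exp_mul_sum_margUn X y hσ2 (add_pos hα.1 hγ) hns, marg, mul_inv, ← Real.exp_neg,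
    ← neg_mul]
  calc _ = priorS a c n p (config βstar) * √((γ / (α + γ)) ^ (config βstar).card) *
        Real.exp (-(α / (2 * σ2)) * sqNorm (y - X *ᵥ βstar)) /
          ∑ S : Finset (Fin p), margUn α σ2 γ a c X y S := by ring
    _ ≤ _ := by gcongr; exact priorS_mul_exp_le_margUn_config X y hσ2.le hα.1.le hc hns βstar hcard

/-- **Lower bound on the marginal posterior probability of the true configuration.**
For every realization of the data `y`,
`π^n(S*) ≥ D_n⁻¹ π(S*) (γ/(α+γ))^{|S*|/2}`. -/
theorem marginal_lower_bound
    (σ2 α γ a c : ℝ)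
    (hσ2 : 0 < σ2) (hα : α ∈ Set.Ioo (0 : ℝ) 1) (hγ : 0 < γ) (ha : 0 < a) (hc : 0 < c)
    {n p : ℕ} (X : Matrix (Fin n) (Fin p) ℝ)
    (hrank : X.rank = n)
    (hns : ∀ S : Finset (Fin p), S.card ≤ n → IsUnit (gram X S).det)
    (βstar : Fin p → ℝ) (hcard : (config βstar).card ≤ n)
    (y : Fin n → ℝ) :
    (Dn α σ2 γ a c X y βstar)⁻¹ * priorS a c n p (config βstar) *
        Real.sqrt ((γ / (α + γ)) ^ (config βstar).card) ≤
      marg α σ2 γ a c X y (config βstar) :=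
  marginal_lower_bound_general σ2 α γ a c hσ2 hα hγ hc X hns βstar hcard y

end VB
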